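/- Let S = S₁ × ⋯ × Sₙ be a direct product of finite commutative antinegative semirings, each with its set of zero-divisors closed under addition. Then for a = (a₁,…,aₙ) and c = (c₁,…,cₙ) in Z(S) with a ≠ c, a and c are adjacent in Γ₁(S) if and only if there exists an index i with aᵢ ∈ Z(Sᵢ) and cᵢ ∈ Z(Sᵢ). -/

import Mathlib

/-- `x` is a zero-divisor of the commutative semiring `S`. -/
def IsZD {S : Type*} [CommSemiring S] (x : S) : Prop :=
  ∃ y : S, y ≠ 0 ∧ x * y = 0

/-- The total graph of a commutative semiring: distinct `x, y` are adjacent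
iff `x + y` is a zero-divisor. -/
def totalGraph (S : Type*) [CommSemiring S] : SimpleGraph S where
  Adj x y := x ≠ y ∧ IsZD (x + y)
  symm := by
    constructor
    intro x y h
    exact ⟨h.1.symm, by rw [add_comm]; exact h.2⟩
  loopless := by constructor; intro x h; exact h.1 rfl

/-- The induced subgraph of the total graph on the set of zero-divisors. -/
def gamma1 (S : Type*) [CommSemiring S] : SimpleGraph {x : S // IsZD x} :=
  SimpleGraph.comap Subtype.val (totalGraph S)

/-- A resolving set: distinct vertices have distinct distance vectors to `W`. -/
def IsResolving {V : Type*} (G : SimpleGraph V) (W : Set V) : Prop :=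
  ∀ x y : V, (∀ w ∈ W, G.dist x w = G.dist y w) → x = y

/-- The metric dimension: the least cardinality of a resolving set. -/
noncomputable def metricDim {V : Type*} (G : SimpleGraph V) : ℕ :=
  sInf {k | ∃ W : Set V, W.Finite ∧ W.ncard = k ∧ IsResolving G W}

/-! A zero-divisor of a product is detected by a single coordinate, witnessed by an annihilator
supported there. In an antinegative semiring, `(a + b) y = a y + b y = 0` forces `a y = b y = 0`,
so with `Z` closed under addition `a + b ∈ Z ↔ a ∈ Z ∧ b ∈ Z`. Applying this coordinatewise to
`a + c` gives the adjacency criterion. -/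

theorem isZD_pi_iff {ι : Type*} {S : ι → Type*} [∀ i, CommSemiring (S i)] (x : ∀ i, S i) :
    IsZD x ↔ ∃ i, IsZD (x i) := by
  classical
  constructor
  · rintro ⟨y, hy, hxy⟩
    obtain ⟨i, hyi⟩ := Function.ne_iff.mp hy
    exact ⟨i, y i, hyi, congrFun hxy i⟩
  · rintro ⟨i, w, hw, hxw⟩
    refine ⟨Pi.single i w, Pi.single_ne_zero_iff.mpr hw, ?_⟩
    rw [← Pi.single_mul_right, hxw, Pi.single_zero]

theorem isZD_add_iff {R : Type*} [CommSemiring R]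
    (anti : ∀ a b : R, a + b = 0 → a = 0 ∧ b = 0)
    (closed : ∀ a b : R, IsZD a → IsZD b → IsZD (a + b)) {a b : R} :
    IsZD (a + b) ↔ IsZD a ∧ IsZD b := by
  refine ⟨fun ⟨y, hy, hab⟩ => ?_, fun ⟨ha, hb⟩ => closed a b ha hb⟩
  obtain ⟨hay, hby⟩ := anti _ _ ((add_mul a b y).symm.trans hab)
  exact ⟨⟨y, hy, hay⟩, ⟨y, hy, hby⟩⟩

theorem stmt5_general {n : ℕ} {S : Fin n → Type*} [∀ i, CommSemiring (S i)]
    (anti : ∀ i, ∀ a b : S i, a + b = 0 → a = 0 ∧ b = 0)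
    (closed : ∀ i, ∀ a b : S i, IsZD a → IsZD b → IsZD (a + b))
    (a c : ∀ i, S i) (ha : IsZD a) (hc : IsZD c) (hne : a ≠ c) :
    (gamma1 (∀ i, S i)).Adj ⟨a, ha⟩ ⟨c, hc⟩ ↔ ∃ i, IsZD (a i) ∧ IsZD (c i) := by
  change a ≠ c ∧ IsZD (a + c) ↔ _
  simp only [isZD_pi_iff, Pi.add_apply, isZD_add_iff (anti _) (closed _)]
  exact and_iff_right hne

theorem stmt5 {n : ℕ} {S : Fin n → Type*} [∀ i, CommSemiring (S i)] [∀ i, Fintype (S i)]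
    (anti : ∀ i, ∀ a b : S i, a + b = 0 → a = 0 ∧ b = 0)
    (closed : ∀ i, ∀ a b : S i, IsZD a → IsZD b → IsZD (a + b))
    (a c : ∀ i, S i) (ha : IsZD a) (hc : IsZD c) (hne : a ≠ c) :
    (gamma1 (∀ i, S i)).Adj ⟨a, ha⟩ ⟨c, hc⟩ ↔ ∃ i, IsZD (a i) ∧ IsZD (c i) :=
  stmt5_general anti closed a c ha hc hne
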